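/- For the hyperelliptic semigroup Γ = ⟨2, 2g+1⟩ and any k ≥ 0, the first Feng-Rao distance of 2g + 2 + k equals the second Feng-Rao distance of 2g + k, i.e., δ¹(2g + 2 + k) = δ²(2g + k). -/

import Mathlib

/-- A numerical semigroup, viewed as a set of integers: contained in ℕ,
contains 0, closed under addition, with finite complement in ℕ. -/
def IsNumericalSemigroup (Γ : Set ℤ) : Prop :=
  (∀ n ∈ Γ, 0 ≤ n) ∧ (0 : ℤ) ∈ Γ ∧ (∀ a ∈ Γ, ∀ b ∈ Γ, a + b ∈ Γ) ∧
    {n : ℤ | 0 ≤ n ∧ n ∉ Γ}.Finite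

/-- The set of divisors of `x` in `Γ`. -/
def SetDiv (Γ : Set ℤ) (x : ℤ) : Set ℤ := {s ∈ Γ | x - s ∈ Γ}

/-- The Apéry set of `Γ` with respect to an integer `x`. -/
def Ap (Γ : Set ℤ) (x : ℤ) : Set ℤ := {m ∈ Γ | m - x ∉ Γ}

/-- The Arf property. -/
def IsArf (Γ : Set ℤ) : Prop :=
  ∀ x ∈ Γ, ∀ y ∈ Γ, ∀ z ∈ Γ, z ≤ y → y ≤ x → x + y - z ∈ Γ

/-- The translate Γ_{e'} = {0} ∪ (e' + Γ). -/
def ShiftSG (Γ : Set ℤ) (e' : ℤ) : Set ℤ := {0} ∪ (fun s => e' + s) '' Γ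

/-- `c` is the conductor of `Γ`: least integer with `c + ℕ ⊆ Γ`. -/
def IsConductor (Γ : Set ℤ) (c : ℤ) : Prop :=
  (∀ n, c ≤ n → n ∈ Γ) ∧ ∀ c', (∀ n, c' ≤ n → n ∈ Γ) → c ≤ c'

/-- `e` is the multiplicity of `Γ`: its least nonzero element. -/
def IsMultiplicity (Γ : Set ℤ) (e : ℤ) : Prop :=
  e ∈ Γ ∧ e ≠ 0 ∧ ∀ s ∈ Γ, s ≠ 0 → e ≤ s

/-- The genus of `Γ`: the number of gaps. -/
noncomputable def genus (Γ : Set ℤ) : ℕ := {n : ℤ | 0 ≤ n ∧ n ∉ Γ}.ncard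

/-- `m` is irreducible in `Γ` if its only divisors are `0` and `m`. -/
def IrreducibleIn (Γ : Set ℤ) (m : ℤ) : Prop :=
  m ∈ Γ ∧ m ≠ 0 ∧ SetDiv Γ m = {0, m}

/-- The second Feng-Rao number of `Γ`, with multiplicity `e`. -/
noncomputable def FengRaoNumber2 (Γ : Set ℤ) (e : ℤ) : ℕ :=
  sInf {n : ℕ | ∃ x : ℤ, 1 ≤ x ∧ x ≤ e ∧ (Ap Γ x).ncard = n}

/-- The first (classical) Feng-Rao distance of `m` in `Γ`. -/
noncomputable def FengRaoDist1 (Γ : Set ℤ) (m : ℤ) : ℕ :=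
  sInf {n : ℕ | ∃ m₁ ∈ Γ, m ≤ m₁ ∧ (SetDiv Γ m₁).ncard = n}

/-- The second (generalized) Feng-Rao distance of `m` in `Γ`. -/
noncomputable def FengRaoDist2 (Γ : Set ℤ) (m : ℤ) : ℕ :=
  sInf {n : ℕ | ∃ m₁ ∈ Γ, ∃ m₂ ∈ Γ, m ≤ m₁ ∧ m₁ < m₂ ∧
    (SetDiv Γ m₁ ∪ SetDiv Γ m₂).ncard = n}

/-!
Since `Γ` contains every even natural number, `D(x) ⊆ D(x + 2)`, so `δ²(m) ≤ δ¹(m + 2)` by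
pairing `m₁ - 2` with `m₁`. Conversely, an optimal pair `m₁ < m₂` for `δ²(m)` either has
`m₂ ≥ m + 2`, or is `(m, m + 1)`; in the latter case every divisor `s ≠ m + 2` of `m + 2`
divides `m` or `m + 1` (whichever of `m - s`, `m + 1 - s` is even), and never equals `m + 1`
because `1 ∉ Γ`, so `#D(m + 2) ≤ #(D(m) ∪ D(m + 1))`.
-/

section EvenSemigroup

variable {Γ : Set ℤ}

theorem setDiv_finite (hnonneg : ∀ n ∈ Γ, 0 ≤ n) (x : ℤ) : (SetDiv Γ x).Finite :=
  (Set.finite_Icc 0 x).subset fun s ⟨hs, hxs⟩ => ⟨hnonneg s hs, by linarith [hnonneg _ hxs]⟩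

theorem self_mem_setDiv {x : ℤ} (hzero : 0 ∈ Γ) (hx : x ∈ Γ) : x ∈ SetDiv Γ x :=
  ⟨hx, by rwa [sub_self]⟩

theorem setDiv_subset_setDiv_add (hadd : ∀ a ∈ Γ, ∀ b ∈ Γ, a + b ∈ Γ) {a : ℤ} (ha : a ∈ Γ)
    (x : ℤ) : SetDiv Γ x ⊆ SetDiv Γ (x + a) := fun s ⟨hs, hxs⟩ =>
  ⟨hs, by simpa only [sub_add_eq_add_sub] using hadd _ hxs _ ha⟩

theorem ncard_setDiv_add_two_le (hnonneg : ∀ n ∈ Γ, 0 ≤ n)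
    (heven : ∀ n, 0 ≤ n → Even n → n ∈ Γ) (hone : (1 : ℤ) ∉ Γ) {m : ℤ} (hm : m + 1 ∈ Γ) :
    (SetDiv Γ (m + 2)).ncard ≤ (SetDiv Γ m ∪ SetDiv Γ (m + 1)).ncard := by
  set U := SetDiv Γ m ∪ SetDiv Γ (m + 1)
  have hU : U.Finite := (setDiv_finite hnonneg m).union (setDiv_finite hnonneg (m + 1))
  have hsub : SetDiv Γ (m + 2) ⊆ insert (m + 2) (U \ {m + 1}) := by
    rintro s ⟨hs, hms⟩
    rw [Set.mem_insert_iff, Set.mem_sdiff, Set.mem_singleton_iff]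
    by_cases hs_top : s = m + 2
    · exact Or.inl hs_top
    have hne_one : m + 2 - s ≠ 1 := fun h => hone (h ▸ hms)
    have := hnonneg _ hms
    refine Or.inr ⟨?_, by omega⟩
    rcases Int.even_or_odd (m - s) with hev | hodd
    · exact Or.inl ⟨hs, heven _ (by omega) hev⟩
    · refine Or.inr ⟨hs, heven _ (by omega) ?_⟩
      rw [show m + 1 - s = m - s + 1 by ring]
      exact hodd.add_one
  calc (SetDiv Γ (m + 2)).ncard
      ≤ (insert (m + 2) (U \ {m + 1})).ncard := Set.ncard_le_ncard hsub (hU.sdiff.insert _)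
    _ ≤ (U \ {m + 1}).ncard + 1 := Set.ncard_insert_le _ _
    _ = U.ncard :=
      Set.ncard_sdiff_singleton_add_one
        (Or.inr (self_mem_setDiv (heven 0 le_rfl Even.zero) hm)) hU

theorem fengRaoDist1_le {m m₁ : ℤ} (hm₁ : m₁ ∈ Γ) (hle : m ≤ m₁) :
    FengRaoDist1 Γ m ≤ (SetDiv Γ m₁).ncard :=
  Nat.sInf_le ⟨m₁, hm₁, hle, rfl⟩

theorem exists_ncard_setDiv_eq_fengRaoDist1 {m m₁ : ℤ} (hm₁ : m₁ ∈ Γ) (hle : m ≤ m₁) :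
    ∃ m₁ ∈ Γ, m ≤ m₁ ∧ (SetDiv Γ m₁).ncard = FengRaoDist1 Γ m :=
  Nat.sInf_mem (s := {n | ∃ m₁ ∈ Γ, m ≤ m₁ ∧ (SetDiv Γ m₁).ncard = n}) ⟨_, m₁, hm₁, hle, rfl⟩

theorem fengRaoDist2_le {m m₁ m₂ : ℤ} (hm₁ : m₁ ∈ Γ) (hm₂ : m₂ ∈ Γ) (hle : m ≤ m₁)
    (hlt : m₁ < m₂) : FengRaoDist2 Γ m ≤ (SetDiv Γ m₁ ∪ SetDiv Γ m₂).ncard :=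
  Nat.sInf_le ⟨m₁, hm₁, m₂, hm₂, hle, hlt, rfl⟩

theorem exists_ncard_union_setDiv_eq_fengRaoDist2 {m m₁ m₂ : ℤ} (hm₁ : m₁ ∈ Γ) (hm₂ : m₂ ∈ Γ)
    (hle : m ≤ m₁) (hlt : m₁ < m₂) :
    ∃ m₁ ∈ Γ, ∃ m₂ ∈ Γ, m ≤ m₁ ∧ m₁ < m₂ ∧
      (SetDiv Γ m₁ ∪ SetDiv Γ m₂).ncard = FengRaoDist2 Γ m :=
  Nat.sInf_mem (s := {n | ∃ m₁ ∈ Γ, ∃ m₂ ∈ Γ, m ≤ m₁ ∧ m₁ < m₂ ∧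
    (SetDiv Γ m₁ ∪ SetDiv Γ m₂).ncard = n}) ⟨_, m₁, hm₁, m₂, hm₂, hle, hlt, rfl⟩

theorem fengRaoDist1_add_two_le_fengRaoDist2 (hnonneg : ∀ n ∈ Γ, 0 ≤ n)
    (heven : ∀ n, 0 ≤ n → Even n → n ∈ Γ) (hone : (1 : ℤ) ∉ Γ) {m : ℤ}
    (hm : ∀ n, m ≤ n → n ∈ Γ) : FengRaoDist1 Γ (m + 2) ≤ FengRaoDist2 Γ m := by
  obtain ⟨m₁, hm₁, m₂, hm₂, hle, hlt, hcard⟩ :=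
    exists_ncard_union_setDiv_eq_fengRaoDist2 (hm m le_rfl) (hm (m + 1) (by omega)) le_rfl
      (lt_add_one m)
  rw [← hcard]
  by_cases hfar : m + 2 ≤ m₂
  · exact (fengRaoDist1_le hm₂ hfar).trans (Set.ncard_le_ncard Set.subset_union_right
      ((setDiv_finite hnonneg m₁).union (setDiv_finite hnonneg m₂)))
  · obtain ⟨hm₁m, hm₂m⟩ : m₁ = m ∧ m₂ = m + 1 := by omega
    subst m₁ m₂
    exact (fengRaoDist1_le (hm (m + 2) (by omega)) le_rfl).trans
      (ncard_setDiv_add_two_le hnonneg heven hone hm₂)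

theorem fengRaoDist2_le_fengRaoDist1_add_two (hadd : ∀ a ∈ Γ, ∀ b ∈ Γ, a + b ∈ Γ)
    (htwo : (2 : ℤ) ∈ Γ) {m : ℤ} (hm : ∀ n, m ≤ n → n ∈ Γ) :
    FengRaoDist2 Γ m ≤ FengRaoDist1 Γ (m + 2) := by
  obtain ⟨m₁, hm₁, hle, hcard⟩ := exists_ncard_setDiv_eq_fengRaoDist1 (hm (m + 2) (by omega)) le_rfl
  rw [← hcard]
  refine (fengRaoDist2_le (hm (m₁ - 2) (by omega)) hm₁ (by omega) (by omega)).trans_eq ?_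
  rw [Set.union_eq_self_of_subset_left]
  simpa using setDiv_subset_setDiv_add hadd htwo (m₁ - 2)

end EvenSemigroup

theorem hyperelliptic_fr1_eq_fr2 (g : ℤ) (hg : 1 ≤ g) (k : ℤ) (hk : 0 ≤ k) :
    let Γ : Set ℤ := {n : ℤ | (0 ≤ n ∧ Even n) ∨ 2 * g + 1 ≤ n}
    FengRaoDist1 Γ (2 * g + 2 + k) = FengRaoDist2 Γ (2 * g + k) := by
  intro Γ
  have hnonneg : ∀ n ∈ Γ, 0 ≤ n := by
    rintro n (⟨hn, -⟩ | hn) <;> omega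
  have heven : ∀ n, 0 ≤ n → Even n → n ∈ Γ := fun n hn he => Or.inl ⟨hn, he⟩
  have hone : (1 : ℤ) ∉ Γ := by
    rintro (⟨-, h⟩ | h)
    exacts [Int.not_even_one h, by omega]
  have hadd : ∀ a ∈ Γ, ∀ b ∈ Γ, a + b ∈ Γ := by
    rintro a ha b hb
    have := hnonneg a ha
    have := hnonneg b hb
    rcases ha, hb with ⟨⟨-, hae⟩ | ha, ⟨-, hbe⟩ | hb⟩
    · exact Or.inl ⟨by omega, hae.add hbe⟩
    all_goals exact Or.inr (by omega)
  have hconductor : ∀ n, 2 * g + k ≤ n → n ∈ Γ := fun n hn => by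
    rcases eq_or_lt_of_le (show 2 * g ≤ n by omega) with rfl | h
    exacts [Or.inl ⟨by omega, even_two_mul g⟩, Or.inr (by omega)]
  rw [show 2 * g + 2 + k = 2 * g + k + 2 by ring]
  exact le_antisymm (fengRaoDist1_add_two_le_fengRaoDist2 hnonneg heven hone hconductor)
    (fengRaoDist2_le_fengRaoDist1_add_two hadd (heven 2 (by norm_num) even_two) hconductor)
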